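/- arXiv:2605.16866 — 4 statements merged into one kernel-verified Lean document; each statement's English description precedes it below -/
import Mathlib

section
/- Let (Ω, F, P) be a probability space, let G₁ and G₂ be sub-σ-algebras of F, and let α ≥ 0 be a real number such that |Cov(f,g)| ≤ α for all real-valued random variables f, g with f G₁-measurable, g G₂-measurable, |f| ≤ 1 and |g| ≤ 1 almost surely. Then for all real-valued random variables U, V, U′, V′ such that U and V are G₁-measurable, U′ and V′ are G₂-measurable, and V ≥ 0 and V′ ≥ 0 almost surely, the complex-valued random variables Z = exp(iU − V) and W = exp(iU′ − V′) satisfy |Cov(Z,W)| ≤ 4α. -/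
open MeasureTheory

/-- product expansion with I² = -1 -/
lemma prod_expand (a b c d : ℝ) :
    ((a:ℂ) + b * Complex.I) * ((c:ℂ) + d * Complex.I) =
      ((a*c - b*d : ℝ) : ℂ) + ((a*d + b*c : ℝ) : ℂ) * Complex.I := by
  push_cast
  linear_combination (b*d : ℂ) * Complex.I_sq


/-- integral of `p + q*I` splits into real and imaginary parts -/
lemma integral_ofReal_add_mul_I {Ω : Type*} [MeasurableSpace Ω] {μ : MeasureTheory.Measure Ω}
    (p q : Ω → ℝ) (hp : MeasureTheory.Integrable p μ) (hq : MeasureTheory.Integrable q μ) :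
    ∫ ω, ((p ω : ℂ) + (q ω : ℂ) * Complex.I) ∂μ =
      ((∫ ω, p ω ∂μ : ℝ) : ℂ) + ((∫ ω, q ω ∂μ : ℝ) : ℂ) * Complex.I := by
  have h1 : MeasureTheory.Integrable (fun ω => (p ω : ℂ)) μ := hp.ofReal
  have h2 : MeasureTheory.Integrable (fun ω => (q ω : ℂ) * Complex.I) μ := hq.ofReal.mul_const _
  rw [MeasureTheory.integral_add h1 h2, MeasureTheory.integral_mul_const]
  congr 1
  · exact integral_ofReal
  · congr 1
    exact integral_ofReal

/-- Let `G₁, G₂` be sub-σ-algebras of `F` and `α ≥ 0` bound the covariances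
of all `[-1,1]`-valued `G₁`- resp. `G₂`-measurable real random variables.  Then for `U, V`
`G₁`-measurable and `U', V'` `G₂`-measurable with `V, V' ≥ 0` a.s., the complex random
variables `Z = exp(iU − V)` and `W = exp(iU' − V')` satisfy `‖Cov(Z,W)‖ ≤ 4α`,
where `Cov(X,Y) = E[XY] − E[X]·E[Y]` (no conjugation). -/
theorem stmt_1 {Ω : Type*} [F : MeasurableSpace Ω] (μ : Measure Ω) [IsProbabilityMeasure μ]
    (G₁ G₂ : MeasurableSpace Ω) (hG₁ : G₁ ≤ F) (hG₂ : G₂ ≤ F)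
    (α : ℝ) (hα : 0 ≤ α)
    (hcov : ∀ f g : Ω → ℝ, Measurable[G₁] f → Measurable[G₂] g →
      (∀ᵐ ω ∂μ, |f ω| ≤ 1) → (∀ᵐ ω ∂μ, |g ω| ≤ 1) →
      |(∫ ω, f ω * g ω ∂μ) - (∫ ω, f ω ∂μ) * (∫ ω, g ω ∂μ)| ≤ α)
    (U V U' V' : Ω → ℝ)
    (hU : Measurable[G₁] U) (hV : Measurable[G₁] V)
    (hU' : Measurable[G₂] U') (hV' : Measurable[G₂] V')
    (hVpos : ∀ᵐ ω ∂μ, 0 ≤ V ω) (hV'pos : ∀ᵐ ω ∂μ, 0 ≤ V' ω) :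
    ‖(∫ ω, Complex.exp (Complex.I * (U ω : ℂ) - (V ω : ℂ)) *
          Complex.exp (Complex.I * (U' ω : ℂ) - (V' ω : ℂ)) ∂μ) -
        (∫ ω, Complex.exp (Complex.I * (U ω : ℂ) - (V ω : ℂ)) ∂μ) *
          (∫ ω, Complex.exp (Complex.I * (U' ω : ℂ) - (V' ω : ℂ)) ∂μ)‖ ≤ 4 * α := by
  set f₁ : Ω → ℝ := fun ω => Real.exp (-V ω) * Real.cos (U ω) with hf₁def
  set f₂ : Ω → ℝ := fun ω => Real.exp (-V ω) * Real.sin (U ω) with hf₂def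
  set g₁ : Ω → ℝ := fun ω => Real.exp (-V' ω) * Real.cos (U' ω) with hg₁def
  set g₂ : Ω → ℝ := fun ω => Real.exp (-V' ω) * Real.sin (U' ω) with hg₂def
  -- measurability w.r.t. sub-σ-algebras
  have hf₁m : Measurable[G₁] f₁ := (hV.neg.exp).mul hU.cos
  have hf₂m : Measurable[G₁] f₂ := (hV.neg.exp).mul hU.sin
  have hg₁m : Measurable[G₂] g₁ := (hV'.neg.exp).mul hU'.cos
  have hg₂m : Measurable[G₂] g₂ := (hV'.neg.exp).mul hU'.sin
  -- a.s. bounds by 1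
  have bound : ∀ (v u : ℝ), 0 ≤ v → |Real.exp (-v) * Real.cos u| ≤ 1 := by
    intro v u hv
    rw [abs_mul, abs_of_nonneg (Real.exp_nonneg _)]
    have h1 : Real.exp (-v) ≤ 1 := Real.exp_le_one_iff.mpr (neg_nonpos.mpr hv)
    nlinarith [Real.abs_cos_le_one u, abs_nonneg (Real.cos u), Real.exp_nonneg (-v)]
  have bound' : ∀ (v u : ℝ), 0 ≤ v → |Real.exp (-v) * Real.sin u| ≤ 1 := by
    intro v u hv
    rw [abs_mul, abs_of_nonneg (Real.exp_nonneg _)]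
    have h1 : Real.exp (-v) ≤ 1 := Real.exp_le_one_iff.mpr (neg_nonpos.mpr hv)
    nlinarith [Real.abs_sin_le_one u, abs_nonneg (Real.sin u), Real.exp_nonneg (-v)]
  have hbf₁ : ∀ᵐ ω ∂μ, |f₁ ω| ≤ 1 := hVpos.mono fun ω hω => bound _ _ hω
  have hbf₂ : ∀ᵐ ω ∂μ, |f₂ ω| ≤ 1 := hVpos.mono fun ω hω => bound' _ _ hω
  have hbg₁ : ∀ᵐ ω ∂μ, |g₁ ω| ≤ 1 := hV'pos.mono fun ω hω => bound _ _ hω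
  have hbg₂ : ∀ᵐ ω ∂μ, |g₂ ω| ≤ 1 := hV'pos.mono fun ω hω => bound' _ _ hω
  -- integrability of a.e.-bounded measurable functions
  have hint : ∀ h : Ω → ℝ, Measurable[F] h → (∀ᵐ ω ∂μ, |h ω| ≤ 1) → Integrable h μ := by
    intro h hm hb
    exact (integrable_const (1:ℝ)).mono' hm.aestronglyMeasurable
      (hb.mono fun ω hω => by simpa using hω)
  have hif₁ : Integrable f₁ μ := hint _ (hf₁m.mono hG₁ le_rfl) hbf₁
  have hif₂ : Integrable f₂ μ := hint _ (hf₂m.mono hG₁ le_rfl) hbf₂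
  have hig₁ : Integrable g₁ μ := hint _ (hg₁m.mono hG₂ le_rfl) hbg₁
  have hig₂ : Integrable g₂ μ := hint _ (hg₂m.mono hG₂ le_rfl) hbg₂
  -- decomposition of Z and W
  have hZeq : ∀ ω, Complex.exp (Complex.I * (U ω : ℂ) - (V ω : ℂ)) =
      (f₁ ω : ℂ) + (f₂ ω : ℂ) * Complex.I := by
    intro ω
    rw [sub_eq_add_neg, Complex.exp_add, mul_comm Complex.I, Complex.exp_mul_I]
    simp only [hf₁def, hf₂def, ← Complex.ofReal_neg, ← Complex.ofReal_exp,
      ← Complex.ofReal_cos, ← Complex.ofReal_sin]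
    push_cast
    ring
  have hWeq : ∀ ω, Complex.exp (Complex.I * (U' ω : ℂ) - (V' ω : ℂ)) =
      (g₁ ω : ℂ) + (g₂ ω : ℂ) * Complex.I := by
    intro ω
    rw [sub_eq_add_neg, Complex.exp_add, mul_comm Complex.I, Complex.exp_mul_I]
    simp only [hg₁def, hg₂def, ← Complex.ofReal_neg, ← Complex.ofReal_exp,
      ← Complex.ofReal_cos, ← Complex.ofReal_sin]
    push_cast
    ring
  have key := fun (p q : Ω → ℝ) => @integral_ofReal_add_mul_I Ω F μ p q
  -- the four covariance bounds
  have c11 := hcov f₁ g₁ hf₁m hg₁m hbf₁ hbg₁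
  have c12 := hcov f₁ g₂ hf₁m hg₂m hbf₁ hbg₂
  have c21 := hcov f₂ g₁ hf₂m hg₁m hbf₂ hbg₁
  have c22 := hcov f₂ g₂ hf₂m hg₂m hbf₂ hbg₂
  -- integrability of products
  have hpint : ∀ (p q : Ω → ℝ), Measurable[G₁] p → Measurable[G₂] q →
      (∀ᵐ ω ∂μ, |p ω| ≤ 1) → (∀ᵐ ω ∂μ, |q ω| ≤ 1) →
      Integrable (fun ω => p ω * q ω) μ := by
    intro p q hpm hqm hpb hqb
    refine hint _ ((hpm.mono hG₁ le_rfl).mul (hqm.mono hG₂ le_rfl)) ?_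
    filter_upwards [hpb, hqb] with ω h1 h2
    rw [abs_mul]
    nlinarith [abs_nonneg (p ω), abs_nonneg (q ω)]
  have hi11 := hpint f₁ g₁ hf₁m hg₁m hbf₁ hbg₁
  have hi12 := hpint f₁ g₂ hf₁m hg₂m hbf₁ hbg₂
  have hi21 := hpint f₂ g₁ hf₂m hg₁m hbf₂ hbg₁
  have hi22 := hpint f₂ g₂ hf₂m hg₂m hbf₂ hbg₂
  -- rewrite the three integrals
  have hZW : ∀ ω, Complex.exp (Complex.I * (U ω : ℂ) - (V ω : ℂ)) *
      Complex.exp (Complex.I * (U' ω : ℂ) - (V' ω : ℂ)) =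
      ((f₁ ω * g₁ ω - f₂ ω * g₂ ω : ℝ) : ℂ) +
        ((f₁ ω * g₂ ω + f₂ ω * g₁ ω : ℝ) : ℂ) * Complex.I := by
    intro ω
    rw [hZeq ω, hWeq ω, prod_expand]
  have hIZ : (∫ ω, Complex.exp (Complex.I * (U ω : ℂ) - (V ω : ℂ)) ∂μ) =
      ((∫ ω, f₁ ω ∂μ : ℝ) : ℂ) + ((∫ ω, f₂ ω ∂μ : ℝ) : ℂ) * Complex.I := by
    rw [← key f₁ f₂ hif₁ hif₂]
    exact integral_congr_ae (Filter.Eventually.of_forall hZeq)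
  have hIW : (∫ ω, Complex.exp (Complex.I * (U' ω : ℂ) - (V' ω : ℂ)) ∂μ) =
      ((∫ ω, g₁ ω ∂μ : ℝ) : ℂ) + ((∫ ω, g₂ ω ∂μ : ℝ) : ℂ) * Complex.I := by
    rw [← key g₁ g₂ hig₁ hig₂]
    exact integral_congr_ae (Filter.Eventually.of_forall hWeq)
  have hIZW : (∫ ω, Complex.exp (Complex.I * (U ω : ℂ) - (V ω : ℂ)) *
        Complex.exp (Complex.I * (U' ω : ℂ) - (V' ω : ℂ)) ∂μ) =
      ((∫ ω, f₁ ω * g₁ ω ∂μ) - (∫ ω, f₂ ω * g₂ ω ∂μ) : ℂ) +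
        (((∫ ω, f₁ ω * g₂ ω ∂μ) + (∫ ω, f₂ ω * g₁ ω ∂μ) : ℝ) : ℂ) * Complex.I := by
    rw [show (∫ ω, Complex.exp (Complex.I * (U ω : ℂ) - (V ω : ℂ)) *
        Complex.exp (Complex.I * (U' ω : ℂ) - (V' ω : ℂ)) ∂μ) =
        ∫ ω, (((f₁ ω * g₁ ω - f₂ ω * g₂ ω : ℝ) : ℂ) +
          ((f₁ ω * g₂ ω + f₂ ω * g₁ ω : ℝ) : ℂ) * Complex.I) ∂μ from
      integral_congr_ae (Filter.Eventually.of_forall hZW)]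
    rw [key _ _ (show Integrable (fun ω => f₁ ω * g₁ ω - f₂ ω * g₂ ω) μ from hi11.sub hi22)
      (show Integrable (fun ω => f₁ ω * g₂ ω + f₂ ω * g₁ ω) μ from hi12.add hi21),
      integral_sub hi11 hi22, integral_add hi12 hi21]
    push_cast
    ring
  set a1 := ∫ ω, f₁ ω ∂μ
  set a2 := ∫ ω, f₂ ω ∂μ
  set b1 := ∫ ω, g₁ ω ∂μ
  set b2 := ∫ ω, g₂ ω ∂μ
  set A11 := ∫ ω, f₁ ω * g₁ ω ∂μ
  set A12 := ∫ ω, f₁ ω * g₂ ω ∂μ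
  set A21 := ∫ ω, f₂ ω * g₁ ω ∂μ
  set A22 := ∫ ω, f₂ ω * g₂ ω ∂μ
  have hfinal : (∫ ω, Complex.exp (Complex.I * (U ω : ℂ) - (V ω : ℂ)) *
          Complex.exp (Complex.I * (U' ω : ℂ) - (V' ω : ℂ)) ∂μ) -
        (∫ ω, Complex.exp (Complex.I * (U ω : ℂ) - (V ω : ℂ)) ∂μ) *
          (∫ ω, Complex.exp (Complex.I * (U' ω : ℂ) - (V' ω : ℂ)) ∂μ) =
      (((A11 - a1 * b1) - (A22 - a2 * b2) : ℝ) : ℂ) +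
        (((A12 - a1 * b2) + (A21 - a2 * b1) : ℝ) : ℂ) * Complex.I := by
    rw [hIZ, hIW, hIZW, prod_expand]
    push_cast
    ring
  rw [hfinal]
  calc ‖(((A11 - a1 * b1) - (A22 - a2 * b2) : ℝ) : ℂ) +
        (((A12 - a1 * b2) + (A21 - a2 * b1) : ℝ) : ℂ) * Complex.I‖
      ≤ ‖(((A11 - a1 * b1) - (A22 - a2 * b2) : ℝ) : ℂ)‖ +
        ‖(((A12 - a1 * b2) + (A21 - a2 * b1) : ℝ) : ℂ) * Complex.I‖ := norm_add_le _ _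
    _ = |(A11 - a1 * b1) - (A22 - a2 * b2)| + |(A12 - a1 * b2) + (A21 - a2 * b1)| := by
        simp only [norm_mul, Complex.norm_I, mul_one, Complex.norm_real, Real.norm_eq_abs]
    _ ≤ (|A11 - a1 * b1| + |A22 - a2 * b2|) + (|A12 - a1 * b2| + |A21 - a2 * b1|) :=
        add_le_add (abs_sub _ _) (abs_add_le _ _)
    _ ≤ (α + α) + (α + α) := add_le_add (add_le_add c11 c22) (add_le_add c12 c21)
    _ = 4 * α := by ring
end

section
/- Let k ≥ 2 and for each s ∈ {1, …, k} let U_s and V_s be real-valued random variables on a common probability space with V_s ≥ 0 almost surely, and set Z_s = exp(iU_s − V_s). Assume: (i) Z_1, …, Z_k are identically distributed; and (ii) there is a real number α ≥ 0 such that for every s ∈ {2, …, k} and all real-valued random variables f, g with |f| ≤ 1 and |g| ≤ 1 almost surely, f measurable with respect to the σ-algebra generated by (U_1, V_1, …, U_{s−1}, V_{s−1}) and g measurable with respect to the σ-algebra generated by (U_s, V_s), one has |Cov(f,g)| ≤ α. Then |E[∏_{s=1}^k Z_s] − (E[Z_1])^k| ≤ 4(k−1)α. -/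
open MeasureTheory ProbabilityTheory Finset

/-- Auxiliary: a bounded measurable function is integrable w.r.t. a probability measure. -/
lemma stmt2_aux_bint {Ω : Type*} [MeasurableSpace Ω] (μ : Measure Ω) [IsProbabilityMeasure μ]
    {E : Type*} [NormedAddCommGroup E] (f : Ω → E) (hf : AEStronglyMeasurable f μ)
    (hb : ∀ᵐ ω ∂μ, ‖f ω‖ ≤ 1) : Integrable f μ :=
  Integrable.mono' (integrable_const 1) hf hb

/-- Auxiliary: complex covariance bound from the four real covariance bounds. -/
lemma stmt2_aux_cov {Ω : Type*} [MeasurableSpace Ω] (μ : Measure Ω) [IsProbabilityMeasure μ]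
    (X Y : Ω → ℂ) (hX : Measurable X) (hY : Measurable Y)
    (hXb : ∀ᵐ ω ∂μ, ‖X ω‖ ≤ 1) (hYb : ∀ᵐ ω ∂μ, ‖Y ω‖ ≤ 1) (α : ℝ)
    (h11 : |(∫ ω, (X ω).re * (Y ω).re ∂μ) - (∫ ω, (X ω).re ∂μ) * (∫ ω, (Y ω).re ∂μ)| ≤ α)
    (h12 : |(∫ ω, (X ω).re * (Y ω).im ∂μ) - (∫ ω, (X ω).re ∂μ) * (∫ ω, (Y ω).im ∂μ)| ≤ α)
    (h21 : |(∫ ω, (X ω).im * (Y ω).re ∂μ) - (∫ ω, (X ω).im ∂μ) * (∫ ω, (Y ω).re ∂μ)| ≤ α)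
    (h22 : |(∫ ω, (X ω).im * (Y ω).im ∂μ) - (∫ ω, (X ω).im ∂μ) * (∫ ω, (Y ω).im ∂μ)| ≤ α) :
    ‖(∫ ω, X ω * Y ω ∂μ) - (∫ ω, X ω ∂μ) * (∫ ω, Y ω ∂μ)‖ ≤ 4 * α := by
  have hXre : ∀ᵐ ω ∂μ, |(X ω).re| ≤ 1 := by
    filter_upwards [hXb] with ω h
    exact le_trans (Complex.abs_re_le_norm _) (by simpa using h)
  have hXim : ∀ᵐ ω ∂μ, |(X ω).im| ≤ 1 := by
    filter_upwards [hXb] with ω h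
    exact le_trans (Complex.abs_im_le_norm _) (by simpa using h)
  have hYre : ∀ᵐ ω ∂μ, |(Y ω).re| ≤ 1 := by
    filter_upwards [hYb] with ω h
    exact le_trans (Complex.abs_re_le_norm _) (by simpa using h)
  have hYim : ∀ᵐ ω ∂μ, |(Y ω).im| ≤ 1 := by
    filter_upwards [hYb] with ω h
    exact le_trans (Complex.abs_im_le_norm _) (by simpa using h)
  have hprodb : ∀ (f g : Ω → ℝ), (∀ᵐ ω ∂μ, |f ω| ≤ 1) → (∀ᵐ ω ∂μ, |g ω| ≤ 1) →
      ∀ᵐ ω ∂μ, ‖f ω * g ω‖ ≤ 1 := by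
    intro f g hf hg
    filter_upwards [hf, hg] with ω h1 h2
    rw [Real.norm_eq_abs, abs_mul]
    calc |f ω| * |g ω| ≤ 1 * 1 := mul_le_mul h1 h2 (abs_nonneg _) zero_le_one
      _ = 1 := one_mul 1
  have h11int : Integrable (fun ω => (X ω).re * (Y ω).re) μ :=
    stmt2_aux_bint μ _ ((Complex.measurable_re.comp hX).mul
      (Complex.measurable_re.comp hY)).aestronglyMeasurable (hprodb _ _ hXre hYre)
  have h12int : Integrable (fun ω => (X ω).re * (Y ω).im) μ :=
    stmt2_aux_bint μ _ ((Complex.measurable_re.comp hX).mul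
      (Complex.measurable_im.comp hY)).aestronglyMeasurable (hprodb _ _ hXre hYim)
  have h21int : Integrable (fun ω => (X ω).im * (Y ω).re) μ :=
    stmt2_aux_bint μ _ ((Complex.measurable_im.comp hX).mul
      (Complex.measurable_re.comp hY)).aestronglyMeasurable (hprodb _ _ hXim hYre)
  have h22int : Integrable (fun ω => (X ω).im * (Y ω).im) μ :=
    stmt2_aux_bint μ _ ((Complex.measurable_im.comp hX).mul
      (Complex.measurable_im.comp hY)).aestronglyMeasurable (hprodb _ _ hXim hYim)
  have hXint : Integrable X μ := stmt2_aux_bint μ _ hX.aestronglyMeasurable hXb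
  have hYint : Integrable Y μ := stmt2_aux_bint μ _ hY.aestronglyMeasurable hYb
  have hXYb : ∀ᵐ ω ∂μ, ‖X ω * Y ω‖ ≤ 1 := by
    filter_upwards [hXb, hYb] with ω h1 h2
    rw [norm_mul]
    calc ‖X ω‖ * ‖Y ω‖ ≤ 1 * 1 := mul_le_mul h1 h2 (norm_nonneg _) zero_le_one
      _ = 1 := one_mul 1
  have hXYint : Integrable (fun ω => X ω * Y ω) μ :=
    stmt2_aux_bint μ _ (hX.mul hY).aestronglyMeasurable hXYb
  -- re/im of the integrals
  have hreX := integral_re (𝕜 := ℂ) hXint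
  have himX := integral_im (𝕜 := ℂ) hXint
  have hreY := integral_re (𝕜 := ℂ) hYint
  have himY := integral_im (𝕜 := ℂ) hYint
  have hreXY := integral_re (𝕜 := ℂ) hXYint
  have himXY := integral_im (𝕜 := ℂ) hXYint
  simp only [RCLike.re_to_complex, RCLike.im_to_complex] at hreX himX hreY himY hreXY himXY
  have hreXY' : (∫ ω, X ω * Y ω ∂μ).re =
      (∫ ω, (X ω).re * (Y ω).re ∂μ) - ∫ ω, (X ω).im * (Y ω).im ∂μ := by
    rw [← hreXY, ← integral_sub h11int h22int]
    exact integral_congr_ae (Filter.Eventually.of_forall fun ω => Complex.mul_re _ _)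
  have himXY' : (∫ ω, X ω * Y ω ∂μ).im =
      (∫ ω, (X ω).re * (Y ω).im ∂μ) + ∫ ω, (X ω).im * (Y ω).re ∂μ := by
    rw [← himXY, ← integral_add h12int h21int]
    exact integral_congr_ae (Filter.Eventually.of_forall fun ω => Complex.mul_im _ _)
  set D : ℂ := (∫ ω, X ω * Y ω ∂μ) - (∫ ω, X ω ∂μ) * (∫ ω, Y ω ∂μ) with hD
  have hDre : D.re = ((∫ ω, (X ω).re * (Y ω).re ∂μ) -
      (∫ ω, (X ω).re ∂μ) * (∫ ω, (Y ω).re ∂μ)) -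
      ((∫ ω, (X ω).im * (Y ω).im ∂μ) - (∫ ω, (X ω).im ∂μ) * (∫ ω, (Y ω).im ∂μ)) := by
    rw [hD]
    simp only [Complex.sub_re, Complex.mul_re, hreXY', ← hreX, ← himX, ← hreY, ← himY]
    ring
  have hDim : D.im = ((∫ ω, (X ω).re * (Y ω).im ∂μ) -
      (∫ ω, (X ω).re ∂μ) * (∫ ω, (Y ω).im ∂μ)) +
      ((∫ ω, (X ω).im * (Y ω).re ∂μ) - (∫ ω, (X ω).im ∂μ) * (∫ ω, (Y ω).re ∂μ)) := by
    rw [hD]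
    simp only [Complex.sub_im, Complex.mul_im, himXY', ← hreX, ← himX, ← hreY, ← himY]
    ring
  have hDreb : |D.re| ≤ 2 * α := by
    rw [hDre]
    calc |_ - _| ≤ |(∫ ω, (X ω).re * (Y ω).re ∂μ) -
          (∫ ω, (X ω).re ∂μ) * (∫ ω, (Y ω).re ∂μ)| +
          |(∫ ω, (X ω).im * (Y ω).im ∂μ) - (∫ ω, (X ω).im ∂μ) * (∫ ω, (Y ω).im ∂μ)| :=
          abs_sub _ _
      _ ≤ α + α := add_le_add h11 h22
      _ = 2 * α := by ring
  have hDimb : |D.im| ≤ 2 * α := by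
    rw [hDim]
    calc |_ + _| ≤ |(∫ ω, (X ω).re * (Y ω).im ∂μ) -
          (∫ ω, (X ω).re ∂μ) * (∫ ω, (Y ω).im ∂μ)| +
          |(∫ ω, (X ω).im * (Y ω).re ∂μ) - (∫ ω, (X ω).im ∂μ) * (∫ ω, (Y ω).re ∂μ)| :=
          abs_add_le _ _
      _ ≤ α + α := add_le_add h12 h21
      _ = 2 * α := by ring
  calc ‖D‖ ≤ |D.re| + |D.im| := by
        exact Complex.norm_le_abs_re_add_abs_im D
    _ ≤ 2 * α + 2 * α := add_le_add hDreb hDimb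
    _ = 4 * α := by ring

/-- Let `k ≥ 2`, and for `s ∈ {0,…,k-1}` let `U s, V s` be real random
variables with `V s ≥ 0` a.s., and `Z s = exp(i U s − V s)`.  Assume the `Z s` are
identically distributed, and that `α ≥ 0` bounds the covariance of every pair of
`[-1,1]`-valued real random variables `f, g` with `f` measurable w.r.t. the σ-algebra
generated by `(U 0, V 0, …, U (s-1), V (s-1))` and `g` measurable w.r.t. the σ-algebra
generated by `(U s, V s)`, for each `1 ≤ s < k`.  Then
`‖E[∏ s, Z s] − (E[Z 0])^k‖ ≤ 4(k−1)α`, with `Cov(X,Y) = E[XY] − E[X]·E[Y]`. -/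
theorem stmt_2 {Ω : Type*} [F : MeasurableSpace Ω] (μ : Measure Ω) [IsProbabilityMeasure μ]
    (k : ℕ) (hk : 2 ≤ k) (U V : ℕ → Ω → ℝ)
    (hUmeas : ∀ s < k, Measurable (U s)) (hVmeas : ∀ s < k, Measurable (V s))
    (hVpos : ∀ s < k, ∀ᵐ ω ∂μ, 0 ≤ V s ω)
    (Z : ℕ → Ω → ℂ)
    (hZ : ∀ s, Z s = fun ω => Complex.exp (Complex.I * (U s ω : ℂ) - (V s ω : ℂ)))
    (hident : ∀ s < k, IdentDistrib (Z s) (Z 0) μ μ)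
    (α : ℝ) (hα : 0 ≤ α)
    (hmix : ∀ s, 1 ≤ s → s < k → ∀ f g : Ω → ℝ,
      Measurable[⨆ j ∈ Finset.range s,
        (MeasurableSpace.comap (U j) inferInstance ⊔ MeasurableSpace.comap (V j) inferInstance)] f →
      Measurable[MeasurableSpace.comap (U s) inferInstance ⊔
        MeasurableSpace.comap (V s) inferInstance] g →
      (∀ᵐ ω ∂μ, |f ω| ≤ 1) → (∀ᵐ ω ∂μ, |g ω| ≤ 1) →
      |(∫ ω, f ω * g ω ∂μ) - (∫ ω, f ω ∂μ) * (∫ ω, g ω ∂μ)| ≤ α) :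
    ‖(∫ ω, ∏ s ∈ range k, Z s ω ∂μ) - (∫ ω, Z 0 ω ∂μ) ^ k‖ ≤ 4 * ((k : ℝ) - 1) * α := by
  -- basic facts about `Z`
  have hZmeas : ∀ s < k, Measurable (Z s) := by
    intro s hs
    rw [hZ]
    exact Complex.measurable_exp.comp
      ((measurable_const.mul (Complex.measurable_ofReal.comp (hUmeas s hs))).sub
        (Complex.measurable_ofReal.comp (hVmeas s hs)))
  have hZbdd : ∀ s < k, ∀ᵐ ω ∂μ, ‖Z s ω‖ ≤ 1 := by
    intro s hs
    filter_upwards [hVpos s hs] with ω hω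
    rw [hZ]
    simp only [Complex.norm_exp]
    have hre : (Complex.I * (U s ω : ℂ) - (V s ω : ℂ)).re = -V s ω := by simp
    rw [hre]
    exact Real.exp_le_one_iff.mpr (by linarith)
  -- facts about partial products
  have hFmeas : ∀ m ≤ k, Measurable (fun ω => ∏ s ∈ range m, Z s ω) := by
    intro m hm
    exact Finset.measurable_prod _ (fun s hs => hZmeas s (lt_of_lt_of_le (mem_range.mp hs) hm))
  have hFbdd : ∀ m ≤ k, ∀ᵐ ω ∂μ, ‖∏ s ∈ range m, Z s ω‖ ≤ 1 := by
    intro m hm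
    have h : ∀ᵐ ω ∂μ, ∀ s, s < m → ‖Z s ω‖ ≤ 1 := by
      rw [ae_all_iff]
      intro s
      by_cases hs : s < m
      · filter_upwards [hZbdd s (hs.trans_le hm)] with ω h _
        exact h
      · filter_upwards with ω h
        exact absurd h hs
    filter_upwards [h] with ω hω
    calc ‖∏ s ∈ range m, Z s ω‖ = ∏ s ∈ range m, ‖Z s ω‖ := by
          simp [norm_prod]
      _ ≤ ∏ s ∈ range m, 1 :=
          Finset.prod_le_prod (fun s _ => norm_nonneg _) (fun s hs => hω s (mem_range.mp hs))
      _ = 1 := by simp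
  -- key covariance step
  have hstep : ∀ m, 1 ≤ m → m < k →
      ‖(∫ ω, (∏ s ∈ range m, Z s ω) * Z m ω ∂μ) -
        (∫ ω, ∏ s ∈ range m, Z s ω ∂μ) * (∫ ω, Z m ω ∂μ)‖ ≤ 4 * α := by
    intro m hm1 hmk
    -- measurability of the block product with respect to the first σ-algebra
    have hZjM1 : ∀ j ∈ range m, Measurable[⨆ j ∈ Finset.range m,
        (MeasurableSpace.comap (U j) inferInstance ⊔
          MeasurableSpace.comap (V j) inferInstance)] (Z j) := by
      intro j hj
      have hle : (MeasurableSpace.comap (U j) inferInstance ⊔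
          MeasurableSpace.comap (V j) inferInstance) ≤ ⨆ j ∈ Finset.range m,
          (MeasurableSpace.comap (U j) inferInstance ⊔
            MeasurableSpace.comap (V j) inferInstance) :=
        le_biSup (fun j => MeasurableSpace.comap (U j) inferInstance ⊔
          MeasurableSpace.comap (V j) inferInstance) hj
      have hU := Measurable.of_comap_le (le_trans le_sup_left hle)
      have hV := Measurable.of_comap_le (le_trans le_sup_right hle)
      rw [hZ]
      exact Complex.measurable_exp.comp
        ((measurable_const.mul (Complex.measurable_ofReal.comp hU)).sub
          (Complex.measurable_ofReal.comp hV))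
    have hFM1 : Measurable[⨆ j ∈ Finset.range m,
        (MeasurableSpace.comap (U j) inferInstance ⊔
          MeasurableSpace.comap (V j) inferInstance)] (fun ω => ∏ s ∈ range m, Z s ω) :=
      Finset.measurable_prod _ hZjM1
    -- measurability of `Z m` with respect to the second σ-algebra
    have hGM2 : Measurable[MeasurableSpace.comap (U m) inferInstance ⊔
        MeasurableSpace.comap (V m) inferInstance] (Z m) := by
      have hU := Measurable.of_comap_le
        (le_sup_left : MeasurableSpace.comap (U m) inferInstance ≤
          MeasurableSpace.comap (U m) inferInstance ⊔ MeasurableSpace.comap (V m) inferInstance)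
      have hV := Measurable.of_comap_le
        (le_sup_right : MeasurableSpace.comap (V m) inferInstance ≤
          MeasurableSpace.comap (U m) inferInstance ⊔ MeasurableSpace.comap (V m) inferInstance)
      rw [hZ]
      exact Complex.measurable_exp.comp
        ((measurable_const.mul (Complex.measurable_ofReal.comp hU)).sub
          (Complex.measurable_ofReal.comp hV))
    -- bounds on real and imaginary parts
    have hf1b : ∀ᵐ ω ∂μ, |(∏ s ∈ range m, Z s ω).re| ≤ 1 := by
      filter_upwards [hFbdd m hmk.le] with ω h
      exact le_trans (Complex.abs_re_le_norm _) (by simpa using h)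
    have hf2b : ∀ᵐ ω ∂μ, |(∏ s ∈ range m, Z s ω).im| ≤ 1 := by
      filter_upwards [hFbdd m hmk.le] with ω h
      exact le_trans (Complex.abs_im_le_norm _) (by simpa using h)
    have hg1b : ∀ᵐ ω ∂μ, |(Z m ω).re| ≤ 1 := by
      filter_upwards [hZbdd m hmk] with ω h
      exact le_trans (Complex.abs_re_le_norm _) (by simpa using h)
    have hg2b : ∀ᵐ ω ∂μ, |(Z m ω).im| ≤ 1 := by
      filter_upwards [hZbdd m hmk] with ω h
      exact le_trans (Complex.abs_im_le_norm _) (by simpa using h)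
    exact stmt2_aux_cov μ (fun ω => ∏ s ∈ range m, Z s ω) (Z m)
      (hFmeas m hmk.le) (hZmeas m hmk) (hFbdd m hmk.le) (hZbdd m hmk) α
      (hmix m hm1 hmk _ _ (Complex.measurable_re.comp hFM1)
        (Complex.measurable_re.comp hGM2) hf1b hg1b)
      (hmix m hm1 hmk _ _ (Complex.measurable_re.comp hFM1)
        (Complex.measurable_im.comp hGM2) hf1b hg2b)
      (hmix m hm1 hmk _ _ (Complex.measurable_im.comp hFM1)
        (Complex.measurable_re.comp hGM2) hf2b hg1b)
      (hmix m hm1 hmk _ _ (Complex.measurable_im.comp hFM1)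
        (Complex.measurable_im.comp hGM2) hf2b hg2b)
  -- the norm of the common expectation is at most 1
  set c : ℂ := ∫ ω, Z 0 ω ∂μ with hc
  have hc1 : ‖c‖ ≤ 1 := by
    have := norm_integral_le_of_norm_le_const (μ := μ) (C := 1) (hZbdd 0 (by omega))
    simpa using this
  -- the main induction
  have main : ∀ m, 1 ≤ m → m ≤ k →
      ‖(∫ ω, ∏ s ∈ range m, Z s ω ∂μ) - c ^ m‖ ≤ 4 * ((m : ℝ) - 1) * α := by
    intro m
    induction m with
    | zero => intro h; omega
    | succ n ih =>
      intro _ hnk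
      by_cases hn : n = 0
      · subst hn
        simp [prod_range_one, hc]
      · have hn1 : 1 ≤ n := Nat.one_le_iff_ne_zero.mpr hn
        have hnk' : n < k := lt_of_lt_of_le (Nat.lt_succ_self n) hnk
        have ih' := ih hn1 hnk'.le
        have hEZn : (∫ ω, Z n ω ∂μ) = c := by
          rw [hc]
          exact (hident n hnk').integral_eq
        have key := hstep n hn1 hnk'
        rw [hEZn] at key
        have hsplit : (∫ ω, ∏ s ∈ range (n + 1), Z s ω ∂μ) =
            ∫ ω, (∏ s ∈ range n, Z s ω) * Z n ω ∂μ := by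
          congr 1
          ext ω
          rw [prod_range_succ]
        have hdecomp : (∫ ω, ∏ s ∈ range (n + 1), Z s ω ∂μ) - c ^ (n + 1) =
            ((∫ ω, (∏ s ∈ range n, Z s ω) * Z n ω ∂μ) -
              (∫ ω, ∏ s ∈ range n, Z s ω ∂μ) * c) +
            ((∫ ω, ∏ s ∈ range n, Z s ω ∂μ) - c ^ n) * c := by
          rw [hsplit, pow_succ]
          ring
        have hn1' : (1 : ℝ) ≤ (n : ℝ) := by exact_mod_cast hn1
        rw [hdecomp]
        calc ‖_ + _‖ ≤ ‖(∫ ω, (∏ s ∈ range n, Z s ω) * Z n ω ∂μ) -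
              (∫ ω, ∏ s ∈ range n, Z s ω ∂μ) * c‖ +
              ‖((∫ ω, ∏ s ∈ range n, Z s ω ∂μ) - c ^ n) * c‖ := norm_add_le _ _
          _ ≤ 4 * α + (4 * ((n : ℝ) - 1) * α) * 1 := by
              refine add_le_add key ?_
              rw [norm_mul]
              exact mul_le_mul ih' hc1 (norm_nonneg _)
                (by nlinarith)
          _ ≤ 4 * ((↑(n + 1) : ℝ) - 1) * α := by
              push_cast
              nlinarith
  have := main k (by omega) le_rfl
  simpa [hc] using this
end

section
/- Let (Ω, F, P) be a probability space, T : Ω → Ω a measure-preserving transformation, ξ : Ω → ℝ measurable, and X_t := ξ ∘ T^t for t ∈ ℕ, so that (X_t) is a stationary process. Let (b_n)_{n≥1} be positive integers with b_n → ∞ and b_n/n → 0 as n → ∞, set q_n = n − b_n + 1, and for each n let g_n : ℝ^{b_n} → ℝ be measurable with 0 ≤ g_n ≤ 1. Assume there is a real sequence (α_m)_{m∈ℕ} with α_m → 0 as m → ∞ such that, for every n and all indices i, j ≥ 1 with j − i ≥ 2b_n, |Cov(g_n(X_i, …, X_{i+b_n−1}), g_n(X_j, …, X_{j+b_n−1}))|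 ≤ α_{b_n+1}. Define Y_n = q_n^{−1} Σ_{i=1}^{q_n} g_n(X_i, …, X_{i+b_n−1}). Then Var(Y_n) → 0 as n → ∞. If, in addition, E[g_n(X_1, …, X_{b_n})] → 0 as n → ∞, then Y_n → 0 in probability. -/
open MeasureTheory ProbabilityTheory Filter Finset

lemma aux_var_bound {Ω : Type*} [MeasurableSpace Ω] (μ : Measure Ω) [IsProbabilityMeasure μ]
    (k m : ℕ) (f : ℕ → Ω → ℝ) (hmeas : ∀ i, Measurable (f i))
    (h01 : ∀ i ω, f i ω ∈ Set.Icc (0:ℝ) 1) (a : ℝ) (ha : 0 ≤ a)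
    (hmix : ∀ i j, i + 2*m ≤ j →
      |(∫ ω, f i ω * f j ω ∂μ) - (∫ ω, f i ω ∂μ)*(∫ ω, f j ω ∂μ)| ≤ a) :
    variance (fun ω => ∑ i ∈ range k, f i ω) μ ≤ (k : ℝ) * (4*m) + (k:ℝ)^2 * a := by
  have hmem : ∀ i, MemLp (f i) 2 μ := fun i =>
    memLp_of_bounded (Filter.Eventually.of_forall (h01 i)) (hmeas i).aestronglyMeasurable 2
  have hint : ∀ i, Integrable (f i) μ := fun i =>
    memLp_one_iff_integrable.mp ((hmem i).mono_exponent (by norm_num))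
  have hintmul : ∀ i j, Integrable (fun ω => f i ω * f j ω) μ := by
    intro i j
    refine memLp_one_iff_integrable.mp (memLp_of_bounded (a := (0:ℝ)) (b := 1)
      (Filter.Eventually.of_forall fun ω => ?_) ((hmeas i).mul (hmeas j)).aestronglyMeasurable 1)
    obtain ⟨hi0, hi1⟩ := h01 i ω; obtain ⟨hj0, hj1⟩ := h01 j ω
    exact (Set.mem_Icc (a := (0:ℝ)) (b := 1)).mpr ⟨mul_nonneg hi0 hj0, mul_le_one₀ hi1 hj0 hj1⟩
  have hSmem : MemLp (fun ω => ∑ i ∈ range k, f i ω) 2 μ := by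
    have := memLp_finset_sum (range k) (fun i _ => hmem i)
    simpa using this
  have hvar : variance (fun ω => ∑ i ∈ range k, f i ω) μ
      = ∑ i ∈ range k, ∑ j ∈ range k,
        ((∫ ω, f i ω * f j ω ∂μ) - (∫ ω, f i ω ∂μ)*(∫ ω, f j ω ∂μ)) := by
    rw [variance_eq_sub hSmem]
    have h1 : (∫ ω, ((fun ω => ∑ i ∈ range k, f i ω) ^ 2) ω ∂μ)
        = ∑ i ∈ range k, ∑ j ∈ range k, ∫ ω, f i ω * f j ω ∂μ := by
      simp_rw [Pi.pow_apply, sq, Finset.sum_mul_sum]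
      rw [integral_finset_sum _ (fun i _ =>
        integrable_finset_sum _ (fun j _ => hintmul i j))]
      exact Finset.sum_congr rfl fun i _ => integral_finset_sum _ (fun j _ => hintmul i j)
    have h2 : (∫ ω, (fun ω => ∑ i ∈ range k, f i ω) ω ∂μ)
        = ∑ i ∈ range k, ∫ ω, f i ω ∂μ := integral_finset_sum _ (fun i _ => hint i)
    rw [h1, h2, sq, Finset.sum_mul_sum, ← Finset.sum_sub_distrib]
    exact Finset.sum_congr rfl fun i _ => by rw [← Finset.sum_sub_distrib]
  rw [hvar]
  have hbnd : ∀ i j : ℕ,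
      ((∫ ω, f i ω * f j ω ∂μ) - (∫ ω, f i ω ∂μ)*(∫ ω, f j ω ∂μ))
        ≤ (if i + 2*m ≤ j ∨ j + 2*m ≤ i then (0:ℝ) else 1) + a := by
    intro i j
    by_cases hfar : i + 2*m ≤ j ∨ j + 2*m ≤ i
    · rw [if_pos hfar, zero_add]
      rcases hfar with h | h
      · exact le_trans (le_abs_self _) (hmix i j h)
      · have := hmix j i h
        rw [show (∫ ω, f j ω * f i ω ∂μ) = ∫ ω, f i ω * f j ω ∂μ by
            simp_rw [mul_comm], mul_comm (∫ ω, f j ω ∂μ)] at this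
        exact le_trans (le_abs_self _) this
    · rw [if_neg hfar]
      have hle1 : (∫ ω, f i ω * f j ω ∂μ) ≤ 1 := by
        calc (∫ ω, f i ω * f j ω ∂μ) ≤ ∫ _ω, (1:ℝ) ∂μ := by
              refine integral_mono (hintmul i j) (integrable_const 1) fun ω => ?_
              obtain ⟨hi0, hi1⟩ := h01 i ω; obtain ⟨hj0, hj1⟩ := h01 j ω
              exact mul_le_one₀ hi1 hj0 hj1
          _ = 1 := by simp
      have hnn : 0 ≤ (∫ ω, f i ω ∂μ)*(∫ ω, f j ω ∂μ) :=
        mul_nonneg (integral_nonneg fun ω => (h01 i ω).1) (integral_nonneg fun ω => (h01 j ω).1)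
      linarith
  calc ∑ i ∈ range k, ∑ j ∈ range k,
        ((∫ ω, f i ω * f j ω ∂μ) - (∫ ω, f i ω ∂μ)*(∫ ω, f j ω ∂μ))
      ≤ ∑ i ∈ range k, ∑ j ∈ range k,
        ((if i + 2*m ≤ j ∨ j + 2*m ≤ i then (0:ℝ) else 1) + a) :=
        Finset.sum_le_sum fun i _ => Finset.sum_le_sum fun j _ => hbnd i j
    _ ≤ (k : ℝ) * (4*m) + (k:ℝ)^2 * a := by
        have hrow : ∀ i : ℕ, ∑ j ∈ range k,
            (if i + 2*m ≤ j ∨ j + 2*m ≤ i then (0:ℝ) else 1) ≤ 4*m := by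
          intro i
          rw [Finset.sum_ite]
          simp only [Finset.sum_const_zero, Finset.sum_const, nsmul_eq_mul, mul_one, zero_add]
          have hsub : (range k).filter (fun j => ¬(i + 2*m ≤ j ∨ j + 2*m ≤ i))
              ⊆ Finset.Ico (i+1-2*m) (i+2*m) := by
            intro j hj
            simp only [Finset.mem_filter, Finset.mem_range, not_or, not_le] at hj
            simp only [Finset.mem_Ico]
            omega
          have hc := Finset.card_le_card hsub
          rw [Nat.card_Ico] at hc
          have h4 : ((range k).filter (fun j => ¬(i + 2*m ≤ j ∨ j + 2*m ≤ i))).card ≤ 4*m := by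
            omega
          calc (((range k).filter (fun j => ¬(i + 2*m ≤ j ∨ j + 2*m ≤ i))).card : ℝ)
              ≤ ((4*m : ℕ) : ℝ) := Nat.cast_le.mpr h4
            _ = 4*(m:ℝ) := by push_cast; ring
        calc ∑ i ∈ range k, ∑ j ∈ range k,
              ((if i + 2*m ≤ j ∨ j + 2*m ≤ i then (0:ℝ) else 1) + a)
            = ∑ i ∈ range k,
              ((∑ j ∈ range k, (if i + 2*m ≤ j ∨ j + 2*m ≤ i then (0:ℝ) else 1)) + k*a) := by
              refine Finset.sum_congr rfl fun i _ => ?_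
              rw [Finset.sum_add_distrib, Finset.sum_const, card_range, nsmul_eq_mul]
          _ ≤ ∑ _i ∈ range k, ((4*(m:ℝ)) + k*a) := Finset.sum_le_sum fun i _ => by
              have := hrow i; linarith
          _ = (k:ℝ)*(4*m) + (k:ℝ)^2*a := by
              rw [Finset.sum_const, card_range, nsmul_eq_mul]; ring

/-- Let `X t = ξ ∘ T^t` be a stationary process (`T` measure
preserving), `b n → ∞` with `b n / n → 0`, `q n = n − b n + 1`, and for each `n` let
`g n : ℝ^{b n} → ℝ` be measurable with `0 ≤ g n ≤ 1`.  Assume there is `α m → 0` so that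
blocks `B n i = g n (X i, …, X (i + b n − 1))` whose start indices are at least `2·b n`
apart have covariance at most `α (b n + 1)` in absolute value.  Then
`Y n = q n⁻¹ ∑_{i<q n} B n i` satisfies `Var(Y n) → 0`; and if moreover
`E[B n 0] → 0`, then `Y n → 0` in probability. -/
theorem stmt_10 {Ω : Type*} [MeasurableSpace Ω] (μ : Measure Ω) [IsProbabilityMeasure μ]
    (T : Ω → Ω) (hT : MeasurePreserving T μ μ)
    (ξ : Ω → ℝ) (hξ : Measurable ξ)
    (X : ℕ → Ω → ℝ) (hX : ∀ t, X t = fun ω => ξ (T^[t] ω))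
    (b : ℕ → ℕ) (hbpos : ∀ n, 0 < b n)
    (hb1 : Tendsto (fun n : ℕ => (b n : ℝ)) atTop atTop)
    (hb2 : Tendsto (fun n : ℕ => (b n : ℝ) / (n : ℝ)) atTop (nhds 0))
    (q : ℕ → ℕ) (hq : ∀ n, q n = n - b n + 1)
    (g : (n : ℕ) → (Fin (b n) → ℝ) → ℝ)
    (hgmeas : ∀ n, Measurable (g n)) (hg01 : ∀ n v, 0 ≤ g n v ∧ g n v ≤ 1)
    (B : (n : ℕ) → ℕ → Ω → ℝ)
    (hB : ∀ n i, B n i = fun ω => g n (fun t : Fin (b n) => X (i + (t : ℕ)) ω))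
    (α : ℕ → ℝ) (hα : Tendsto α atTop (nhds 0))
    (hmix : ∀ n : ℕ, ∀ i j : ℕ, i + 2 * b n ≤ j →
      |(∫ ω, B n i ω * B n j ω ∂μ) - (∫ ω, B n i ω ∂μ) * (∫ ω, B n j ω ∂μ)| ≤ α (b n + 1))
    (Y : ℕ → Ω → ℝ)
    (hY : ∀ n, Y n = fun ω => (q n : ℝ)⁻¹ * ∑ i ∈ range (q n), B n i ω) :
    Tendsto (fun n => variance (Y n) μ) atTop (nhds 0) ∧
    ((Tendsto (fun n => ∫ ω, B n 0 ω ∂μ) atTop (nhds 0)) →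
      ∀ ε > (0 : ℝ), Tendsto (fun n => (μ {ω | ε < |Y n ω|}).toReal) atTop (nhds 0)) := by
  
  have hTi : ∀ i : ℕ, Measurable (T^[i]) := fun i => hT.measurable.iterate i
  have hXm : ∀ t, Measurable (X t) := fun t => by rw [hX]; exact hξ.comp (hTi t)
  have hBmeas : ∀ n i, Measurable (B n i) := fun n i => by
    rw [hB]; exact (hgmeas n).comp (measurable_pi_lambda _ fun t => hXm _)
  have hB01 : ∀ n i ω, B n i ω ∈ Set.Icc (0:ℝ) 1 := fun n i ω => by
    rw [hB]; exact ⟨(hg01 n _).1, (hg01 n _).2⟩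
  have hqpos : ∀ n, 0 < q n := fun n => by rw [hq]; omega
  have hqR : ∀ n, (0:ℝ) < (q n : ℝ) := fun n => by exact_mod_cast hqpos n
  -- variance bound
  have hvarb : ∀ n, variance (Y n) μ ≤ 4*((b n:ℝ)/(q n)) + |α (b n + 1)| := by
    intro n
    have habs : 0 ≤ |α (b n + 1)| := abs_nonneg _
    have hmix' : ∀ i j, i + 2*(b n) ≤ j →
        |(∫ ω, B n i ω * B n j ω ∂μ) - (∫ ω, B n i ω ∂μ)*(∫ ω, B n j ω ∂μ)|
          ≤ |α (b n + 1)| :=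
      fun i j h => (hmix n i j h).trans (le_abs_self _)
    have hYe : Y n = ((q n:ℝ)⁻¹) • (fun ω => ∑ i ∈ range (q n), B n i ω) := by
      rw [hY]; rfl
    have hub := aux_var_bound μ (q n) (b n) (B n) (hBmeas n) (hB01 n) _ habs hmix'
    rw [hYe, variance_smul]
    have hk := hqR n
    calc ((q n:ℝ)⁻¹)^2 * variance (fun ω => ∑ i ∈ range (q n), B n i ω) μ
        ≤ ((q n:ℝ)⁻¹)^2 * ((q n:ℝ)*(4*(b n)) + (q n:ℝ)^2 * |α (b n + 1)|) :=
          mul_le_mul_of_nonneg_left hub (by positivity)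
      _ = 4*((b n:ℝ)/(q n)) + |α (b n + 1)| := by field_simp
  have bN : Tendsto b atTop atTop := tendsto_natCast_atTop_iff.mp hb1
  have hαabs : Tendsto (fun n => |α (b n + 1)|) atTop (nhds 0) := by
    have h1 : Tendsto (fun n => b n + 1) atTop atTop :=
      tendsto_atTop_mono (fun n => Nat.le_succ (b n)) bN
    have := (hα.comp h1).abs
    simpa using this
  have hbq : Tendsto (fun n => (b n:ℝ)/(q n)) atTop (nhds 0) := by
    refine squeeze_zero'
      (Eventually.of_forall fun n => div_nonneg (Nat.cast_nonneg _) (Nat.cast_nonneg _)) ?_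
      (by have := hb2.const_mul (2:ℝ); simpa using this)
    filter_upwards [hb2.eventually_lt_const (by norm_num : (0:ℝ) < 1/4),
      eventually_ge_atTop 1] with n h14 hn1
    have hn0 : (0:ℝ) < (n:ℝ) := by exact_mod_cast hn1
    have hblt : (b n:ℝ) < 1/4 * (n:ℝ) := (div_lt_iff₀ hn0).mp h14
    have hbn : b n ≤ n := by
      have : (b n:ℝ) ≤ (n:ℝ) := by nlinarith
      exact_mod_cast this
    have hqcast : (q n:ℝ) = (n:ℝ) - (b n:ℝ) + 1 := by
      rw [hq]; push_cast [Nat.cast_sub hbn]; ring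
    have hb0 : (0:ℝ) ≤ (b n:ℝ) := Nat.cast_nonneg _
    have h2 : 2*((b n:ℝ)/(n:ℝ)) = (2*(b n:ℝ))/(n:ℝ) := by ring
    rw [h2, div_le_div_iff₀ (hqR n) hn0]
    nlinarith [hqR n]
  have part1 : Tendsto (fun n => variance (Y n) μ) atTop (nhds 0) := by
    refine squeeze_zero' (Eventually.of_forall fun n => variance_nonneg _ _)
      (Eventually.of_forall hvarb) ?_
    have := (hbq.const_mul (4:ℝ)).add hαabs
    simpa using this
  refine ⟨part1, ?_⟩
  intro hE ε hε
  have hBint : ∀ n i, Integrable (B n i) μ := fun n i =>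
    memLp_one_iff_integrable.mp (memLp_of_bounded
      (Eventually.of_forall (hB01 n i)) (hBmeas n i).aestronglyMeasurable 1)
  have hBint0 : ∀ n i, ∫ ω, B n i ω ∂μ = ∫ ω, B n 0 ω ∂μ := by
    intro n i
    have hcomp : B n i = fun ω => B n 0 (T^[i] ω) := by
      funext ω
      rw [hB, hB]
      show g n (fun t : Fin (b n) => X (i + (t:ℕ)) ω)
        = g n (fun t : Fin (b n) => X (0 + (t:ℕ)) (T^[i] ω))
      congr 1
      funext t
      rw [hX, hX]
      show ξ (T^[i + (t:ℕ)] ω) = ξ (T^[0 + (t:ℕ)] (T^[i] ω))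
      rw [← Function.iterate_add_apply]
      have h' : 0 + (t:ℕ) + i = i + (t:ℕ) := by omega
      rw [h']
    rw [hcomp, ← MeasureTheory.integral_map (hTi i).aemeasurable
      (by rw [(hT.iterate i).map_eq]; exact (hBmeas n 0).aestronglyMeasurable),
      (hT.iterate i).map_eq]
  have hEY : ∀ n, ∫ ω, Y n ω ∂μ = ∫ ω, B n 0 ω ∂μ := by
    intro n
    rw [hY]
    simp only
    rw [integral_const_mul, integral_finset_sum _ (fun i _ => hBint n i)]
    have hs : ∑ i ∈ range (q n), ∫ ω, B n i ω ∂μ = (q n : ℝ) * ∫ ω, B n 0 ω ∂μ := by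
      rw [Finset.sum_congr rfl fun i _ => hBint0 n i, Finset.sum_const, card_range,
        nsmul_eq_mul]
    rw [hs, ← mul_assoc, inv_mul_cancel₀ (hqR n).ne', one_mul]
  have hYmem : ∀ n, MemLp (Y n) 2 μ := by
    intro n
    refine memLp_of_bounded (a := (0:ℝ)) (b := 1) (Eventually.of_forall fun ω => ?_) ?_ 2
    · rw [hY]
      refine ⟨mul_nonneg (inv_nonneg.mpr (Nat.cast_nonneg _))
        (Finset.sum_nonneg fun i _ => (hB01 n i ω).1), ?_⟩
      have hsum : ∑ i ∈ range (q n), B n i ω ≤ (q n : ℝ) := by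
        calc ∑ i ∈ range (q n), B n i ω ≤ ∑ _i ∈ range (q n), (1:ℝ) :=
            Finset.sum_le_sum fun i _ => (hB01 n i ω).2
          _ = (q n : ℝ) := by simp
      calc (q n:ℝ)⁻¹ * ∑ i ∈ range (q n), B n i ω ≤ (q n:ℝ)⁻¹ * (q n : ℝ) :=
          mul_le_mul_of_nonneg_left hsum (inv_nonneg.mpr (Nat.cast_nonneg _))
        _ = 1 := inv_mul_cancel₀ (hqR n).ne'
    · rw [hY]
      exact ((Finset.measurable_sum _ fun i _ => hBmeas n i).const_mul
        ((q n:ℝ)⁻¹)).aestronglyMeasurable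
  refine squeeze_zero' (g := fun n => variance (Y n) μ / (ε/2)^2)
    (Eventually.of_forall fun n => ENNReal.toReal_nonneg) ?_ ?_
  · filter_upwards [hE.eventually_lt_const (half_pos hε)] with n hEn
    have hEnn : 0 ≤ ∫ ω, B n 0 ω ∂μ := integral_nonneg fun ω => (hB01 n 0 ω).1
    have hsub : {ω | ε < |Y n ω|} ⊆ {ω | ε/2 ≤ |Y n ω - ∫ x, Y n x ∂μ|} := by
      intro ω hω
      simp only [Set.mem_setOf_eq] at hω ⊢
      rw [hEY n]
      have h1 : |Y n ω| - |∫ ω, B n 0 ω ∂μ| ≤ |Y n ω - ∫ ω, B n 0 ω ∂μ| :=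
        abs_sub_abs_le_abs_sub _ _
      rw [abs_of_nonneg hEnn] at h1
      linarith
    have hcheb := meas_ge_le_variance_div_sq (μ := μ) (hYmem n) (half_pos hε)
    calc (μ {ω | ε < |Y n ω|}).toReal
        ≤ (μ {ω | ε/2 ≤ |Y n ω - ∫ x, Y n x ∂μ|}).toReal :=
          ENNReal.toReal_mono (measure_ne_top μ _) (measure_mono hsub)
      _ ≤ (ENNReal.ofReal (variance (Y n) μ / (ε/2)^2)).toReal :=
          ENNReal.toReal_mono ENNReal.ofReal_ne_top hcheb
      _ = variance (Y n) μ / (ε/2)^2 :=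
          ENNReal.toReal_ofReal (div_nonneg (variance_nonneg _ _) (by positivity))
  · have := part1.div_const ((ε/2)^2)
    simpa using this
end

section
/- Let (Ω, F, P) be a probability space, T : Ω → Ω a measure-preserving transformation, ξ : Ω → ℝ measurable, and X_t := ξ ∘ T^t for t ∈ ℕ. For a block length b ≥ 1 and start index i ≥ 1 define the self-normalized block statistic T_{i,b} := (Σ_{t=i}^{i+b−1} X_t) / (Σ_{t=i}^{i+b−1} X_t²)^{1/2}, with the convention T_{i,b} := 0 when the denominator is zero. Let (b_n)_{n≥1} be positive integers with b_n → ∞ and b_n/n → 0 as n → ∞, set q_n = n − b_n + 1, and define L_{n,b_n}(x) := q_n^{−1} Σ_{i=1}^{q_n} 1{T_{i,b_n} ≤ x}. Assume there is a real sequence (α_m)_{m∈ℕ} with α_m → 0 as m → ∞ such that for every n, every x ∈ ℝ, and all indices i, j ≥ 1 with j − i ≥ 2b_n, |Cov(1{T_{i,b_n} ≤ x}, 1{T_{j,b_n} ≤ x})| ≤ α_{b_n+1}. If there exists a real-valued random variable W such that T_{1,b_n} converges in distribution to W as n → ∞, then for every x ∈ ℝ that is a continuity point of t ↦ P(W ≤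 t), L_{n,b_n}(x) → P(W ≤ x) in probability as n → ∞. -/
open MeasureTheory ProbabilityTheory Filter Finset Topology

section AuxStmt11

variable {Ω : Type*} [MeasurableSpace Ω] {μ : Measure Ω}

lemma aux11_ind_eq (g : Ω → ℝ) (x : ℝ) :
    (fun ω => if g ω ≤ x then (1:ℝ) else 0) = Set.indicator {ω | g ω ≤ x} (fun _ => (1:ℝ)) := by
  ext ω; by_cases h : g ω ≤ x <;> simp [Set.indicator_apply, Set.mem_setOf_eq, h]

lemma aux11_ind_integrable [IsFiniteMeasure μ] {g : Ω → ℝ} (hg : Measurable g) (x : ℝ) :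
    Integrable (fun ω => if g ω ≤ x then (1:ℝ) else 0) μ := by
  rw [aux11_ind_eq]
  exact (integrable_const 1).indicator (hg measurableSet_Iic)

lemma aux11_ind_integral {g : Ω → ℝ} (hg : Measurable g) (x : ℝ) :
    ∫ ω, (if g ω ≤ x then (1:ℝ) else 0) ∂μ = (μ {ω | g ω ≤ x}).toReal := by
  have hs : MeasurableSet {ω | g ω ≤ x} := hg measurableSet_Iic
  rw [aux11_ind_eq, integral_indicator_const (1:ℝ) hs]
  simp
  rfl

lemma aux11_cheb [IsFiniteMeasure μ] {h : Ω → ℝ}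
    (hint : Integrable (fun ω => (h ω)^2) μ) {c : ℝ} (hc : 0 < c) :
    (μ {ω | c ≤ |h ω|}).toReal ≤ (∫ ω, (h ω)^2 ∂μ) / c^2 := by
  have key := mul_meas_ge_le_integral_of_nonneg (μ := μ) (f := fun ω => (h ω)^2)
    (ae_of_all μ fun ω => sq_nonneg _) hint (c^2)
  have hsub : {ω | c ≤ |h ω|} ⊆ {ω | c^2 ≤ (h ω)^2} := by
    intro ω hω
    simp only [Set.mem_setOf_eq] at *
    calc c^2 ≤ |h ω|^2 := by
          apply pow_le_pow_left₀ hc.le hω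
      _ = (h ω)^2 := sq_abs _
  have hmono : (μ {ω | c ≤ |h ω|}).toReal ≤ (μ {ω | c^2 ≤ (h ω)^2}).toReal :=
    ENNReal.toReal_mono (measure_ne_top _ _) (measure_mono hsub)
  rw [le_div_iff₀ (by positivity : (0:ℝ) < c^2)]
  calc (μ {ω | c ≤ |h ω|}).toReal * c^2
      ≤ (μ {ω | c^2 ≤ (h ω)^2}).toReal * c^2 := by
        exact mul_le_mul_of_nonneg_right hmono (by positivity)
    _ = c^2 * (μ {ω | c^2 ≤ (h ω)^2}).toReal := by ring
    _ ≤ ∫ ω, (h ω)^2 ∂μ := key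

lemma aux11_nullatom {Ω' : Type*} [MeasurableSpace Ω'] (μ' : Measure Ω') [IsProbabilityMeasure μ']
    (W : Ω' → ℝ) (hW : Measurable W) (x : ℝ)
    (hx : ContinuousAt (fun t => (μ' {ω' | W ω' ≤ t}).toReal) x) :
    μ' {ω' | W ω' = x} = 0 := by
  set F := fun t => (μ' {ω' | W ω' ≤ t}).toReal with hF
  have hbound : ∀ t, t < x → (μ' {ω' | W ω' = x}).toReal ≤ F x - F t := by
    intro t ht
    have hdisj : Disjoint {ω' | W ω' ≤ t} {ω' | W ω' = x} := by
      rw [Set.disjoint_left]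
      intro ω h1 h2
      simp only [Set.mem_setOf_eq] at h1 h2
      rw [h2] at h1
      exact absurd h1 (not_le.mpr ht)
    have hsub : {ω' | W ω' ≤ t} ∪ {ω' | W ω' = x} ⊆ {ω' | W ω' ≤ x} := by
      rintro ω (h | h) <;> simp only [Set.mem_setOf_eq] at *
      · exact h.trans ht.le
      · exact h.le
    have hunion := measure_union (μ := μ') hdisj (hW (measurableSet_singleton x))
    have hle : μ' {ω' | W ω' ≤ t} + μ' {ω' | W ω' = x} ≤ μ' {ω' | W ω' ≤ x} := by
      rw [← hunion]; exact measure_mono hsub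
    have h1 := ENNReal.toReal_mono (measure_ne_top _ _) hle
    rw [ENNReal.toReal_add (measure_ne_top _ _) (measure_ne_top _ _)] at h1
    simp only [hF]
    linarith
  have htend : Tendsto (fun k : ℕ => x - 1/((k:ℝ)+1)) atTop (𝓝 x) := by
    have h0 : Tendsto (fun k : ℕ => 1/((k:ℝ)+1)) atTop (𝓝 0) :=
      tendsto_one_div_add_atTop_nhds_zero_nat
    simpa using tendsto_const_nhds.sub h0
  have hFt : Tendsto (fun k : ℕ => F (x - 1/((k:ℝ)+1))) atTop (𝓝 (F x)) :=
    hx.tendsto.comp htend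
  have hlim : Tendsto (fun k : ℕ => F x - F (x - 1/((k:ℝ)+1))) atTop (𝓝 0) := by
    simpa using (tendsto_const_nhds (x := F x)).sub hFt
  have hle0 : (μ' {ω' | W ω' = x}).toReal ≤ 0 := by
    refine ge_of_tendsto' hlim fun k => hbound _ ?_
    have : (0:ℝ) < 1/((k:ℝ)+1) := by positivity
    linarith
  have hz : (μ' {ω' | W ω' = x}).toReal = 0 := le_antisymm hle0 ENNReal.toReal_nonneg
  exact ((ENNReal.toReal_eq_zero_iff _).mp hz).resolve_right (measure_ne_top _ _)

end AuxStmt11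

set_option maxHeartbeats 2000000 in
/-- Let `X t = ξ ∘ T^t` be a stationary process (`T` measure
preserving), and for block length `bb` and start index `i` let
`Tst i bb = (∑_{t<bb} X (i+t)) / √(∑_{t<bb} X (i+t)²)` be the self-normalized block
statistic (equal to `0` when the denominator vanishes, which is the convention of
division by zero in Lean).  Let `b n → ∞`, `b n / n → 0`, `q n = n − b n + 1`, and
`L n x = q n⁻¹ ∑_{i<q n} 1{Tst i (b n) ≤ x}`.  Assume there is `α m → 0` bounding the
covariances of the indicators `1{Tst i (b n) ≤ x}`, `1{Tst j (b n) ≤ x}` for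
`j − i ≥ 2 b n`, and that `Tst 0 (b n)` converges in distribution to `W`.  Then for every
continuity point `x` of `t ↦ P(W ≤ t)`, `L n x → P(W ≤ x)` in probability. -/
theorem stmt_11 {Ω : Type*} [MeasurableSpace Ω] (μ : Measure Ω) [IsProbabilityMeasure μ]
    {Ω' : Type*} [MeasurableSpace Ω'] (μ' : Measure Ω') [IsProbabilityMeasure μ']
    (T : Ω → Ω) (hT : MeasurePreserving T μ μ)
    (ξ : Ω → ℝ) (hξ : Measurable ξ)
    (X : ℕ → Ω → ℝ) (hX : ∀ t, X t = fun ω => ξ (T^[t] ω))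
    (Tst : ℕ → ℕ → Ω → ℝ)
    (hTst : ∀ i bb ω, Tst i bb ω =
      (∑ t ∈ range bb, X (i + t) ω) / Real.sqrt (∑ t ∈ range bb, (X (i + t) ω) ^ 2))
    (b : ℕ → ℕ) (hbpos : ∀ n, 0 < b n)
    (hb1 : Tendsto (fun n : ℕ => (b n : ℝ)) atTop atTop)
    (hb2 : Tendsto (fun n : ℕ => (b n : ℝ) / (n : ℝ)) atTop (nhds 0))
    (q : ℕ → ℕ) (hq : ∀ n, q n = n - b n + 1)
    (α : ℕ → ℝ) (hα : Tendsto α atTop (nhds 0))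
    (hmix : ∀ n : ℕ, ∀ x : ℝ, ∀ i j : ℕ, i + 2 * b n ≤ j →
      |(∫ ω, (if Tst i (b n) ω ≤ x then (1 : ℝ) else 0) *
            (if Tst j (b n) ω ≤ x then (1 : ℝ) else 0) ∂μ) -
        (∫ ω, (if Tst i (b n) ω ≤ x then (1 : ℝ) else 0) ∂μ) *
          (∫ ω, (if Tst j (b n) ω ≤ x then (1 : ℝ) else 0) ∂μ)| ≤ α (b n + 1))
    (W : Ω' → ℝ) (hW : Measurable W)
    (hconv : ∀ f : BoundedContinuousFunction ℝ ℝ,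
      Tendsto (fun n : ℕ => ∫ ω, f (Tst 0 (b n) ω) ∂μ) atTop (nhds (∫ ω', f (W ω') ∂μ')))
    (x : ℝ) (hx : ContinuousAt (fun t => (μ' {ω' | W ω' ≤ t}).toReal) x) :
    ∀ ε > (0 : ℝ), Tendsto (fun n : ℕ =>
        (μ {ω | ε < |(q n : ℝ)⁻¹ * (∑ i ∈ range (q n),
          (if Tst i (b n) ω ≤ x then (1 : ℝ) else 0)) - (μ' {ω' | W ω' ≤ x}).toReal|}).toReal)
      atTop (nhds 0) := by
  intro ε hε
  set p : ℝ := (μ' {ω' | W ω' ≤ x}).toReal with hp_def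
  have hTm : Measurable T := hT.measurable
  have hXm : ∀ t, Measurable (X t) := fun t => by
    rw [hX t]; exact hξ.comp (hTm.iterate t)
  have hTstm : ∀ i bb, Measurable (Tst i bb) := by
    intro i bb
    have heq : Tst i bb = fun ω => (∑ t ∈ range bb, X (i + t) ω) /
        Real.sqrt (∑ t ∈ range bb, (X (i + t) ω) ^ 2) := funext fun ω => hTst i bb ω
    rw [heq]
    exact Measurable.div (Finset.measurable_sum _ fun t _ => hXm (i + t))
      (Real.continuous_sqrt.measurable.comp
        (Finset.measurable_sum _ fun t _ => (hXm (i + t)).pow_const 2))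
  -- the indicator family
  set In : ℕ → ℕ → Ω → ℝ := fun n i ω => if Tst i (b n) ω ≤ x then 1 else 0 with hIn_def
  have hInm : ∀ n i, Measurable (In n i) := fun n i =>
    Measurable.ite ((hTstm i (b n)) measurableSet_Iic) measurable_const measurable_const
  have hInint : ∀ n i, Integrable (In n i) μ := fun n i =>
    aux11_ind_integrable (hTstm i (b n)) x
  have hIn0 : ∀ n i ω, 0 ≤ In n i ω := fun n i ω => by
    simp only [hIn_def]; split <;> norm_num
  have hIn1 : ∀ n i ω, In n i ω ≤ 1 := fun n i ω => by
    simp only [hIn_def]; split <;> norm_num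
  -- stationarity
  have hXshift : ∀ (t i : ℕ) (ω : Ω), X (i + t) ω = X t (T^[i] ω) := by
    intro t i ω
    rw [hX, hX]
    simp only []
    rw [Nat.add_comm i t, Function.iterate_add_apply]
  have hTshift : ∀ n i ω, Tst i (b n) ω = Tst 0 (b n) (T^[i] ω) := by
    intro n i ω
    rw [hTst, hTst]
    simp only [Nat.zero_add]
    rw [show (∑ t ∈ range (b n), X (i + t) ω) = ∑ t ∈ range (b n), X t (T^[i] ω) from
        Finset.sum_congr rfl fun t _ => hXshift t i ω,
      show (∑ t ∈ range (b n), (X (i + t) ω) ^ 2)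
          = ∑ t ∈ range (b n), (X t (T^[i] ω)) ^ 2 from
        Finset.sum_congr rfl fun t _ => by rw [hXshift t i ω]]
  have hshift : ∀ n i, In n i = fun ω => In n 0 (T^[i] ω) := by
    intro n i
    funext ω
    simp only [hIn_def, hTshift n i ω]
  have hpn_eq : ∀ n i, ∫ ω, In n i ω ∂μ = ∫ ω, In n 0 ω ∂μ := by
    intro n i
    have hmp : MeasurePreserving T^[i] μ μ := hT.iterate i
    rw [hshift n i, ← integral_map (hTm.iterate i).aemeasurable
      (by rw [hmp.map_eq]; exact (hInm n 0).aestronglyMeasurable), hmp.map_eq]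
  -- convergence of the means via portmanteau
  have hnull : μ' {ω' | W ω' = x} = 0 := aux11_nullatom μ' W hW x hx
  have hmapW : IsProbabilityMeasure (μ'.map W) := Measure.isProbabilityMeasure_map hW.aemeasurable
  have hmapn : ∀ n, IsProbabilityMeasure (μ.map (Tst 0 (b n))) := fun n =>
    Measure.isProbabilityMeasure_map (hTstm 0 (b n)).aemeasurable
  set Pn : ℕ → ProbabilityMeasure ℝ := fun n => ⟨μ.map (Tst 0 (b n)), hmapn n⟩ with hPn_def
  set PW : ProbabilityMeasure ℝ := ⟨μ'.map W, hmapW⟩ with hPW_def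
  have hweak : Tendsto Pn atTop (𝓝 PW) := by
    rw [ProbabilityMeasure.tendsto_iff_forall_integral_tendsto]
    intro f
    have h1 : ∀ n, ∫ y, f y ∂((Pn n : Measure ℝ)) = ∫ ω, f (Tst 0 (b n) ω) ∂μ := fun n =>
      integral_map (hTstm 0 (b n)).aemeasurable f.continuous.measurable.aestronglyMeasurable
    have h2 : ∫ y, f y ∂((PW : Measure ℝ)) = ∫ ω', f (W ω') ∂μ' :=
      integral_map hW.aemeasurable f.continuous.measurable.aestronglyMeasurable
    simp only [h1, h2]
    exact hconv f
  have hbdry : (PW : Measure ℝ) (frontier (Set.Iic x)) = 0 := by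
    rw [frontier_Iic]
    show (μ'.map W) {x} = 0
    rw [Measure.map_apply hW (measurableSet_singleton x)]
    exact hnull
  have hkey := ProbabilityMeasure.tendsto_measure_of_null_frontier_of_tendsto' hweak hbdry
  have hp0 : Tendsto (fun n => ∫ ω, In n 0 ω ∂μ) atTop (𝓝 p) := by
    have h1 : ∀ n, ∫ ω, In n 0 ω ∂μ = ((Pn n : Measure ℝ) (Set.Iic x)).toReal := by
      intro n
      simp only [hIn_def]
      rw [aux11_ind_integral (hTstm 0 (b n)) x]
      congr 1
      rw [hPn_def]
      show μ {ω | Tst 0 (b n) ω ≤ x} = (μ.map (Tst 0 (b n))) (Set.Iic x)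
      rw [Measure.map_apply (hTstm 0 (b n)) measurableSet_Iic]
      rfl
    have h2 : ((PW : Measure ℝ) (Set.Iic x)).toReal = p := by
      show ((μ'.map W) (Set.Iic x)).toReal = p
      rw [Measure.map_apply hW measurableSet_Iic]
      rfl
    simp only [h1]
    rw [← h2]
    exact (ENNReal.tendsto_toReal (measure_ne_top _ _)).comp hkey
  -- basic integral facts about the indicators
  have hIprod_int : ∀ n i j, Integrable (fun ω => In n i ω * In n j ω) μ := by
    intro n i j
    refine Integrable.bdd_mul (c := 1) (hInint n j) (hInm n i).aestronglyMeasurable (ae_of_all _ fun ω => ?_)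
    rw [Real.norm_eq_abs, abs_of_nonneg (hIn0 n i ω)]
    exact hIn1 n i ω
  have hIint_nonneg : ∀ n i, 0 ≤ ∫ ω, In n i ω ∂μ := fun n i =>
    integral_nonneg (hIn0 n i)
  have hIint_le1 : ∀ n i, ∫ ω, In n i ω ∂μ ≤ 1 := by
    intro n i
    calc ∫ ω, In n i ω ∂μ ≤ ∫ _, (1:ℝ) ∂μ :=
          integral_mono (hInint n i) (integrable_const 1) (hIn1 n i)
      _ = 1 := by simp
  have hIprod_nonneg : ∀ n i j, 0 ≤ ∫ ω, In n i ω * In n j ω ∂μ := fun n i j =>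
    integral_nonneg fun ω => mul_nonneg (hIn0 n i ω) (hIn0 n j ω)
  have hIprod_le1 : ∀ n i j, ∫ ω, In n i ω * In n j ω ∂μ ≤ 1 := by
    intro n i j
    calc ∫ ω, In n i ω * In n j ω ∂μ ≤ ∫ _, (1:ℝ) ∂μ :=
          integral_mono (hIprod_int n i j) (integrable_const 1)
            (fun ω => mul_le_one₀ (hIn1 n i ω) (hIn0 n j ω) (hIn1 n j ω))
      _ = 1 := by simp
  have hcov_bd1 : ∀ n i j, |(∫ ω, In n i ω * In n j ω ∂μ) -
      (∫ ω, In n i ω ∂μ) * (∫ ω, In n j ω ∂μ)| ≤ 1 := by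
    intro n i j
    rw [abs_le]
    constructor
    · nlinarith [hIprod_nonneg n i j, hIint_nonneg n i, hIint_nonneg n j,
        hIint_le1 n i, hIint_le1 n j]
    · nlinarith [hIprod_le1 n i j, hIint_nonneg n i, hIint_nonneg n j,
        hIint_le1 n i, hIint_le1 n j]
  have hcov_far : ∀ n i j, (i + 2 * b n ≤ j ∨ j + 2 * b n ≤ i) →
      |(∫ ω, In n i ω * In n j ω ∂μ) -
        (∫ ω, In n i ω ∂μ) * (∫ ω, In n j ω ∂μ)| ≤ |α (b n + 1)| := by
    intro n i j hij
    rcases hij with h | h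
    · refine le_trans ?_ (le_abs_self _)
      simpa only [hIn_def] using hmix n x i j h
    · refine le_trans ?_ (le_abs_self _)
      have hcomm : (fun ω => In n i ω * In n j ω) = fun ω => In n j ω * In n i ω := by
        funext ω; ring
      rw [show (∫ ω, In n i ω * In n j ω ∂μ) = ∫ ω, In n j ω * In n i ω ∂μ from by
          rw [hcomm],
        mul_comm (∫ ω, In n i ω ∂μ)]
      simpa only [hIn_def] using hmix n x j i h
  -- Chebyshev bound for each n
  have hcheb : ∀ n, (μ {ω | ε/2 ≤ |(q n:ℝ)⁻¹ * (∑ i ∈ range (q n), In n i ω) -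
        (∫ ω', In n 0 ω' ∂μ)|}).toReal
      ≤ (4 * (b n:ℝ)/(q n:ℝ) + |α (b n + 1)|)/(ε/2)^2 := by
    intro n
    have hQpos : 0 < q n := by rw [hq]; omega
    have hQR : (0:ℝ) < (q n : ℝ) := by exact_mod_cast hQpos
    set pn : ℝ := ∫ ω', In n 0 ω' ∂μ with hpn_def
    have hsq : ∀ ω : Ω, ((q n : ℝ)⁻¹ * (∑ i ∈ range (q n), In n i ω) - pn)^2
        = ((q n : ℝ)⁻¹)^2 * ∑ i ∈ range (q n), ∑ j ∈ range (q n),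
            (In n i ω - pn) * (In n j ω - pn) := by
      intro ω
      have hpt : (q n : ℝ)⁻¹ * (∑ i ∈ range (q n), In n i ω) - pn
          = (q n : ℝ)⁻¹ * ∑ i ∈ range (q n), (In n i ω - pn) := by
        rw [Finset.sum_sub_distrib, Finset.sum_const, Finset.card_range, nsmul_eq_mul, mul_sub]
        congr 1
        field_simp
      rw [hpt, mul_pow, sq ((range (q n)).sum _), Finset.sum_mul_sum]
    have hint1 : ∀ i j : ℕ, Integrable (fun ω => (In n i ω - pn) * (In n j ω - pn)) μ := by
      intro i j
      refine Integrable.bdd_mul (c := 1 + |pn|) ((hInint n j).sub (integrable_const pn))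
        ((hInm n i).sub measurable_const).aestronglyMeasurable (ae_of_all _ fun ω => ?_)
      rw [Real.norm_eq_abs]
      have h1 := hIn0 n i ω
      have h2 := hIn1 n i ω
      have h3 := neg_abs_le pn
      have h4 := le_abs_self pn
      rw [abs_le]
      constructor <;> nlinarith
    have hrow_int : ∀ i, Integrable
        (fun ω => ∑ j ∈ range (q n), (In n i ω - pn) * (In n j ω - pn)) μ :=
      fun i => integrable_finset_sum _ fun j _ => hint1 i j
    have hintegral_sq : ∫ ω, ((q n:ℝ)⁻¹ * (∑ i ∈ range (q n), In n i ω) - pn)^2 ∂μ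
        = ((q n:ℝ)⁻¹)^2 * ∑ i ∈ range (q n), ∑ j ∈ range (q n),
            ∫ ω, (In n i ω - pn) * (In n j ω - pn) ∂μ := by
      simp only [hsq]
      rw [integral_const_mul]
      congr 1
      rw [integral_finset_sum _ fun i _ => hrow_int i]
      exact Finset.sum_congr rfl fun i _ => integral_finset_sum _ fun j _ => hint1 i j
    have hcov_eq : ∀ i j, ∫ ω, (In n i ω - pn) * (In n j ω - pn) ∂μ
        = (∫ ω, In n i ω * In n j ω ∂μ) -
          (∫ ω, In n i ω ∂μ) * (∫ ω, In n j ω ∂μ) := by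
      intro i j
      have hexp : (fun ω => (In n i ω - pn) * (In n j ω - pn))
          = fun ω => In n i ω * In n j ω - pn * In n i ω - pn * In n j ω + pn * pn := by
        funext ω; ring
      have hfa : Integrable (fun ω => In n i ω * In n j ω - pn * In n i ω) μ :=
        (hIprod_int n i j).sub ((hInint n i).const_mul pn)
      have hfb : Integrable
          (fun ω => In n i ω * In n j ω - pn * In n i ω - pn * In n j ω) μ :=
        hfa.sub ((hInint n j).const_mul pn)
      rw [hexp, integral_add hfb (integrable_const (pn * pn)),
        integral_sub hfa ((hInint n j).const_mul pn),
        integral_sub (hIprod_int n i j) ((hInint n i).const_mul pn),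
        integral_const_mul, integral_const_mul, integral_const,
        hpn_eq n i, hpn_eq n j, ← hpn_def]
      simp only [probReal_univ, measure_univ, ENNReal.toReal_one, smul_eq_mul, one_mul]
      ring
    have hcard : ∀ i : ℕ, ((range (q n)).filter
        (fun j => j < i + 2 * b n ∧ i < j + 2 * b n)).card ≤ 4 * b n := by
      intro i
      have hsubf : (range (q n)).filter (fun j => j < i + 2 * b n ∧ i < j + 2 * b n)
          ⊆ Finset.Ico (i + 1 - 2 * b n) (i + 2 * b n) := by
        intro j hj
        simp only [Finset.mem_filter, Finset.mem_range, Finset.mem_Ico] at hj ⊢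
        omega
      calc ((range (q n)).filter (fun j => j < i + 2 * b n ∧ i < j + 2 * b n)).card
          ≤ (Finset.Ico (i + 1 - 2 * b n) (i + 2 * b n)).card := Finset.card_le_card hsubf
        _ = (i + 2 * b n) - (i + 1 - 2 * b n) := Nat.card_Ico _ _
        _ ≤ 4 * b n := by omega
    have hinner : ∀ i : ℕ, ∑ j ∈ range (q n),
        |(∫ ω, In n i ω * In n j ω ∂μ) - (∫ ω, In n i ω ∂μ) * (∫ ω, In n j ω ∂μ)|
        ≤ 4 * (b n:ℝ) + (q n:ℝ) * |α (b n + 1)| := by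
      intro i
      rw [← Finset.sum_filter_add_sum_filter_not (range (q n))
        (fun j => j < i + 2 * b n ∧ i < j + 2 * b n)]
      have hA : ∑ j ∈ (range (q n)).filter (fun j => j < i + 2 * b n ∧ i < j + 2 * b n),
          |(∫ ω, In n i ω * In n j ω ∂μ) - (∫ ω, In n i ω ∂μ) * (∫ ω, In n j ω ∂μ)|
          ≤ 4 * (b n:ℝ) := by
        calc ∑ j ∈ (range (q n)).filter (fun j => j < i + 2 * b n ∧ i < j + 2 * b n),
            |(∫ ω, In n i ω * In n j ω ∂μ) - (∫ ω, In n i ω ∂μ) * (∫ ω, In n j ω ∂μ)|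
            ≤ ∑ _j ∈ (range (q n)).filter (fun j => j < i + 2 * b n ∧ i < j + 2 * b n),
              (1:ℝ) := Finset.sum_le_sum fun j _ => hcov_bd1 n i j
          _ = (((range (q n)).filter (fun j => j < i + 2 * b n ∧ i < j + 2 * b n)).card : ℝ) := by
              simp
          _ ≤ ((4 * b n : ℕ) : ℝ) := by exact_mod_cast hcard i
          _ = 4 * (b n:ℝ) := by push_cast; ring
      have hB : ∑ j ∈ (range (q n)).filter (fun j => ¬(j < i + 2 * b n ∧ i < j + 2 * b n)),
          |(∫ ω, In n i ω * In n j ω ∂μ) - (∫ ω, In n i ω ∂μ) * (∫ ω, In n j ω ∂μ)|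
          ≤ (q n:ℝ) * |α (b n + 1)| := by
        calc ∑ j ∈ (range (q n)).filter (fun j => ¬(j < i + 2 * b n ∧ i < j + 2 * b n)),
            |(∫ ω, In n i ω * In n j ω ∂μ) - (∫ ω, In n i ω ∂μ) * (∫ ω, In n j ω ∂μ)|
            ≤ ∑ _j ∈ (range (q n)).filter (fun j => ¬(j < i + 2 * b n ∧ i < j + 2 * b n)),
              |α (b n + 1)| := by
              refine Finset.sum_le_sum fun j hj => ?_
              have hj' := (Finset.mem_filter.mp hj).2
              exact hcov_far n i j (by omega)
          _ = (((range (q n)).filter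
                (fun j => ¬(j < i + 2 * b n ∧ i < j + 2 * b n))).card : ℝ) * |α (b n + 1)| := by
              rw [Finset.sum_const, nsmul_eq_mul]
          _ ≤ (q n:ℝ) * |α (b n + 1)| := by
              refine mul_le_mul_of_nonneg_right ?_ (abs_nonneg _)
              have hcle := (Finset.card_filter_le (range (q n))
                (fun j => ¬(j < i + 2 * b n ∧ i < j + 2 * b n))).trans_eq (Finset.card_range _)
              exact_mod_cast hcle
      linarith
    have hsum_bd : ∑ i ∈ range (q n), ∑ j ∈ range (q n),
        ((∫ ω, In n i ω * In n j ω ∂μ) - (∫ ω, In n i ω ∂μ) * (∫ ω, In n j ω ∂μ))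
        ≤ (q n : ℝ) * (4 * (b n : ℝ) + (q n : ℝ) * |α (b n + 1)|) := by
      calc ∑ i ∈ range (q n), ∑ j ∈ range (q n),
          ((∫ ω, In n i ω * In n j ω ∂μ) - (∫ ω, In n i ω ∂μ) * (∫ ω, In n j ω ∂μ))
          ≤ ∑ i ∈ range (q n), ∑ j ∈ range (q n),
            |(∫ ω, In n i ω * In n j ω ∂μ) - (∫ ω, In n i ω ∂μ) * (∫ ω, In n j ω ∂μ)| :=
            Finset.sum_le_sum fun i _ => Finset.sum_le_sum fun j _ => le_abs_self _
        _ ≤ ∑ _i ∈ range (q n), (4 * (b n:ℝ) + (q n:ℝ) * |α (b n + 1)|) :=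
            Finset.sum_le_sum fun i _ => hinner i
        _ = (q n : ℝ) * (4 * (b n : ℝ) + (q n : ℝ) * |α (b n + 1)|) := by
            rw [Finset.sum_const, Finset.card_range, nsmul_eq_mul]
    have hvar : ∫ ω, ((q n:ℝ)⁻¹ * (∑ i ∈ range (q n), In n i ω) - pn)^2 ∂μ
        ≤ 4 * (b n:ℝ) / (q n:ℝ) + |α (b n + 1)| := by
      rw [hintegral_sq]
      simp only [hcov_eq]
      calc ((q n:ℝ)⁻¹)^2 * ∑ i ∈ range (q n), ∑ j ∈ range (q n),
          ((∫ ω, In n i ω * In n j ω ∂μ) - (∫ ω, In n i ω ∂μ) * (∫ ω, In n j ω ∂μ))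
          ≤ ((q n:ℝ)⁻¹)^2 * ((q n : ℝ) * (4 * (b n : ℝ) + (q n : ℝ) * |α (b n + 1)|)) :=
            mul_le_mul_of_nonneg_left hsum_bd (by positivity)
        _ = 4 * (b n:ℝ) / (q n:ℝ) + |α (b n + 1)| := by
            field_simp
            try ring
    have hsq_int : Integrable
        (fun ω => ((q n:ℝ)⁻¹ * (∑ i ∈ range (q n), In n i ω) - pn)^2) μ := by
      have heq : (fun ω => ((q n:ℝ)⁻¹ * (∑ i ∈ range (q n), In n i ω) - pn)^2)
          = fun ω => ((q n : ℝ)⁻¹)^2 * ∑ i ∈ range (q n), ∑ j ∈ range (q n),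
              (In n i ω - pn) * (In n j ω - pn) := funext hsq
      rw [heq]
      exact ((integrable_finset_sum _ fun i _ => hrow_int i).const_mul _)
    refine le_trans (aux11_cheb hsq_int (by positivity : (0:ℝ) < ε/2)) ?_
    gcongr
  -- assemble
  have hev1 : ∀ᶠ n in atTop, |(∫ ω, In n 0 ω ∂μ) - p| < ε/2 := by
    rcases Metric.tendsto_atTop.mp hp0 (ε/2) (by positivity) with ⟨N, hN⟩
    exact eventually_atTop.mpr ⟨N, fun n hn => by simpa [Real.dist_eq] using hN n hn⟩
  have hchain : ∀ᶠ n in atTop,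
      (μ {ω | ε < |(q n:ℝ)⁻¹ * (∑ i ∈ range (q n), In n i ω) - p|}).toReal
      ≤ (4 * (b n:ℝ)/(q n:ℝ) + |α (b n + 1)|)/(ε/2)^2 := by
    filter_upwards [hev1] with n hn
    refine le_trans ?_ (hcheb n)
    refine ENNReal.toReal_mono (measure_ne_top _ _) (measure_mono ?_)
    intro ω hω
    simp only [Set.mem_setOf_eq] at hω ⊢
    have habs := abs_sub_le ((q n:ℝ)⁻¹ * (∑ i ∈ range (q n), In n i ω))
      (∫ ω', In n 0 ω' ∂μ) p
    linarith
  have hbn_top : Tendsto b atTop atTop := tendsto_natCast_atTop_iff.mp hb1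
  have hα_abs : Tendsto (fun n => |α (b n + 1)|) atTop (𝓝 0) := by
    have h1 : Tendsto (fun n => b n + 1) atTop atTop :=
      tendsto_atTop_mono (fun n => Nat.le_add_right (b n) 1) hbn_top
    have h2 := (hα.comp h1).abs
    simpa using h2
  have hq_tend : Tendsto (fun n => 4 * (b n:ℝ) / (q n:ℝ)) atTop (𝓝 0) := by
    have hev : ∀ᶠ n : ℕ in atTop,
        0 ≤ 4 * (b n:ℝ)/(q n:ℝ) ∧ 4 * (b n:ℝ) / (q n:ℝ) ≤ 8 * ((b n:ℝ)/(n:ℝ)) := by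
      have h2n : ∀ᶠ n : ℕ in atTop, (b n:ℝ)/(n:ℝ) < 1/2 := by
        rcases Metric.tendsto_atTop.mp hb2 (1/2) (by norm_num) with ⟨N, hN⟩
        refine eventually_atTop.mpr ⟨N, fun n hn => ?_⟩
        have := hN n hn
        rw [Real.dist_eq, sub_zero] at this
        exact lt_of_abs_lt this
      filter_upwards [h2n, eventually_ge_atTop 1] with n hn hn1
      have hnpos : (0:ℝ) < (n:ℝ) := by exact_mod_cast hn1
      have hb_lt : (b n:ℝ) < (n:ℝ)/2 := by
        rw [div_lt_iff₀ hnpos] at hn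
        linarith
    
      have hbn_le : b n ≤ n := by
        have : (b n:ℝ) < (n:ℝ) := by linarith
        exact_mod_cast this.le
      have hqcast : (q n : ℝ) = (n:ℝ) - (b n:ℝ) + 1 := by
        rw [hq n]
        push_cast [Nat.cast_sub hbn_le]
        ring
      have hq_ge : (n:ℝ)/2 ≤ (q n:ℝ) := by
        rw [hqcast]; linarith
      have hq_pos : (0:ℝ) < (q n:ℝ) := lt_of_lt_of_le (by linarith) hq_ge
      constructor
      · positivity
      · calc 4 * (b n:ℝ) / (q n:ℝ) ≤ 4 * (b n:ℝ) / ((n:ℝ)/2) :=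
            div_le_div_of_nonneg_left (by positivity) (by linarith) hq_ge
          _ = 8 * ((b n:ℝ)/(n:ℝ)) := by
            field_simp
            try ring
    refine squeeze_zero' (hev.mono fun n h => h.1) (hev.mono fun n h => h.2) ?_
    have := hb2.const_mul (8:ℝ)
    simpa using this
  have hB0 : Tendsto (fun n => (4 * (b n:ℝ)/(q n:ℝ) + |α (b n + 1)|)/(ε/2)^2) atTop (𝓝 0) := by
    have := (hq_tend.add hα_abs).div_const ((ε/2)^2)
    simpa using this
  have hfinal : Tendsto (fun n =>
      (μ {ω | ε < |(q n:ℝ)⁻¹ * (∑ i ∈ range (q n), In n i ω) - p|}).toReal) atTop (𝓝 0) :=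
    squeeze_zero' (Eventually.of_forall fun n => ENNReal.toReal_nonneg) hchain hB0
  simpa only [hIn_def] using hfinal
end
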